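/- If F ⊆ X is equi-homogeneous then for any fixed point x ∈ F: (i) dim_A F equals the infimum over all s ≥ 0 such that for every δ₀ > 0 there exists C > 0 with N(B_δ(x) ∩ F, ρ) ≤ C (δ/ρ)^s for all δ, ρ with 0 < ρ < δ ≤ δ₀; and (ii) dim_LA F equals the supremum over all s ≥ 0 such that for every δ₀ > 0 there exists C > 0 with N(B_δ(x) ∩ F, ρ) ≥ C (δ/ρ)^s for all δ, ρ with 0 < ρ < δ ≤ δ₀. -/

import Mathlib

open Set Metric Filter Bornology MeasureTheory
open scoped ENNReal NNReal

/-- `coverNumber F δ` : the minimum number of closed `δ`-balls with centres in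
`F` needed to cover `F` (`∞` if there is no finite such cover). -/
noncomputable def coverNumber {X : Type*} [MetricSpace X] (F : Set X) (δ : ℝ) : ℝ≥0∞ :=
  ⨅ (t : Finset X) (_ : (t : Set X) ⊆ F) (_ : F ⊆ ⋃ x ∈ t, closedBall x δ),
    (t.card : ℝ≥0∞)

/-- `F` is equi-homogeneous: for every `δ₀ > 0` there are `M ≥ 1` and
`c₁, c₂ > 0` with
`sup_{x∈F} N(B_δ(x) ∩ F, ρ) ≤ M inf_{x∈F} N(B_{c₁δ}(x) ∩ F, c₂ρ)`
for all `0 < ρ < δ ≤ δ₀`. -/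
def EquiHomogeneous {X : Type*} [MetricSpace X] (F : Set X) : Prop :=
  ∀ δ₀ : ℝ, 0 < δ₀ → ∃ M c₁ c₂ : ℝ, 1 ≤ M ∧ 0 < c₁ ∧ 0 < c₂ ∧
    ∀ δ ρ : ℝ, 0 < ρ → ρ < δ → δ ≤ δ₀ →
      (⨆ x ∈ F, coverNumber (closedBall x δ ∩ F) ρ) ≤
        ENNReal.ofReal M * (⨅ x ∈ F, coverNumber (closedBall x (c₁ * δ) ∩ F) (c₂ * ρ))

/-- The Assouad dimension of `F`. -/
noncomputable def assouadDim {X : Type*} [MetricSpace X] (F : Set X) : ℝ :=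
  sInf {s : ℝ | 0 ≤ s ∧ ∀ δ₀ : ℝ, 0 < δ₀ → ∃ C : ℝ, 0 < C ∧
    ∀ x ∈ F, ∀ δ ρ : ℝ, 0 < ρ → ρ < δ → δ ≤ δ₀ →
      coverNumber (closedBall x δ ∩ F) ρ ≤ ENNReal.ofReal (C * (δ / ρ) ^ s)}

/-- The lower Assouad dimension of `F`. -/
noncomputable def lowerAssouadDim {X : Type*} [MetricSpace X] (F : Set X) : ℝ :=
  sSup {s : ℝ | 0 ≤ s ∧ ∀ δ₀ : ℝ, 0 < δ₀ → ∃ C : ℝ, 0 < C ∧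
    ∀ x ∈ F, ∀ δ ρ : ℝ, 0 < ρ → ρ < δ → δ ≤ δ₀ →
      ENNReal.ofReal (C * (δ / ρ) ^ s) ≤ coverNumber (closedBall x δ ∩ F) ρ}

/-! If `F` is equi-homogeneous, every ball `B_δ(y) ∩ F` needs, up to the factor `M` and the
rescalings `c₁, c₂`, as many `ρ`-balls as `B_{c₁δ}(x) ∩ F` at the fixed point `x`, and conversely.
A power bound `C (δ/ρ)^s` at `x` therefore transfers to all of `F`, with `C` changed by `M` and
`(c₁/c₂)^s`; the scale pairs pushed out of the range `ρ < δ` by the rescaling need only one ball,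
and `(δ/ρ)^s ≥ 1` absorbs them. -/

section CoverNumber

variable {X : Type*} [MetricSpace X] {A B : Set X}

theorem coverNumber_le_card {r : ℝ} (t : Finset X) (htA : (t : Set X) ⊆ A)
    (hcov : A ⊆ ⋃ z ∈ t, closedBall z r) : coverNumber A r ≤ t.card :=
  iInf₂_le_of_le t htA (iInf_le _ hcov)

theorem coverNumber_le_one_of_subset_closedBall {z : X} {r : ℝ} (hz : z ∈ A)
    (hA : A ⊆ closedBall z r) : coverNumber A r ≤ 1 := by
  simpa using coverNumber_le_card {z} (by simpa using hz) (by simpa using hA)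

theorem one_le_coverNumber (hA : A.Nonempty) (r : ℝ) : 1 ≤ coverNumber A r := by
  refine le_iInf₂ fun t _ => le_iInf fun hcov => ?_
  obtain ⟨z, hz, -⟩ := mem_iUnion₂.1 (hcov hA.some_mem)
  exact_mod_cast Finset.card_pos.2 ⟨z, hz⟩

/-- Each centre of a cover of `B` is replaced by a point of `A` in its ball. -/
theorem coverNumber_two_mul_le (hAB : A ⊆ B) (r : ℝ) :
    coverNumber A (2 * r) ≤ coverNumber B r := by
  classical
  rcases A.eq_empty_or_nonempty with rfl | ⟨a₀, ha₀⟩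
  · exact (coverNumber_le_card ∅ (by simp) (empty_subset _)).trans (by simp)
  refine le_iInf₂ fun t _ => le_iInf fun hcov => ?_
  have hpick : ∀ z, ∃ a ∈ A, (closedBall z r ∩ A).Nonempty → dist a z ≤ r := by
    intro z
    by_cases h : (closedBall z r ∩ A).Nonempty
    · exact ⟨h.some, h.some_mem.2, fun _ => h.some_mem.1⟩
    · exact ⟨a₀, ha₀, fun h' => absurd h' h⟩
  choose f hfA hfz using hpick
  refine (coverNumber_le_card (t.image f) ?_ ?_).trans (mod_cast Finset.card_image_le)
  · simpa [subset_def] using fun z _ => hfA z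
  · intro a ha
    obtain ⟨z, hz, haz⟩ := mem_iUnion₂.1 (hcov (hAB ha))
    refine mem_iUnion₂.2 ⟨f z, Finset.mem_image_of_mem f hz, ?_⟩
    rw [mem_closedBall] at haz ⊢
    calc dist a (f z) ≤ dist a z + dist (f z) z := dist_triangle_right _ _ _
      _ ≤ r + r := add_le_add haz (hfz z ⟨a, haz, ha⟩)
      _ = 2 * r := (two_mul r).symm

theorem coverNumber_closedBall_inter_le_one {F : Set X} {x : X} {δ ρ : ℝ} (hx : x ∈ F)
    (hδ : 0 ≤ δ) (hδρ : δ ≤ ρ) : coverNumber (closedBall x δ ∩ F) ρ ≤ 1 :=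
  coverNumber_le_one_of_subset_closedBall ⟨mem_closedBall_self hδ, hx⟩
    (inter_subset_left.trans (closedBall_subset_closedBall hδρ))

end CoverNumber

section CoverBounds

variable {X : Type*} [MetricSpace X]

/- `assouadDim F` and `lowerAssouadDim F` are the infimum and supremum of the `s ≥ 0` with
`CoverUpperBound F F s` and `CoverLowerBound F F s`; the local conditions at `x` are `S = {x}`. -/
def CoverUpperBound (F S : Set X) (s : ℝ) : Prop :=
  ∀ δ₀ : ℝ, 0 < δ₀ → ∃ C : ℝ, 0 < C ∧
    ∀ x ∈ S, ∀ δ ρ : ℝ, 0 < ρ → ρ < δ → δ ≤ δ₀ →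
      coverNumber (closedBall x δ ∩ F) ρ ≤ ENNReal.ofReal (C * (δ / ρ) ^ s)

def CoverLowerBound (F S : Set X) (s : ℝ) : Prop :=
  ∀ δ₀ : ℝ, 0 < δ₀ → ∃ C : ℝ, 0 < C ∧
    ∀ x ∈ S, ∀ δ ρ : ℝ, 0 < ρ → ρ < δ → δ ≤ δ₀ →
      ENNReal.ofReal (C * (δ / ρ) ^ s) ≤ coverNumber (closedBall x δ ∩ F) ρ

variable {F S T : Set X} {s : ℝ} {x : X}

theorem CoverUpperBound.mono (h : CoverUpperBound F S s) (hTS : T ⊆ S) :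
    CoverUpperBound F T s := fun δ₀ hδ₀ =>
  (h δ₀ hδ₀).imp fun _ hC => ⟨hC.1, fun y hy => hC.2 y (hTS hy)⟩

theorem CoverLowerBound.mono (h : CoverLowerBound F S s) (hTS : T ⊆ S) :
    CoverLowerBound F T s := fun δ₀ hδ₀ =>
  (h δ₀ hδ₀).imp fun _ hC => ⟨hC.1, fun y hy => hC.2 y (hTS hy)⟩

theorem coverUpperBound_singleton_iff :
    CoverUpperBound F {x} s ↔ ∀ δ₀ : ℝ, 0 < δ₀ → ∃ C : ℝ, 0 < C ∧
      ∀ δ ρ : ℝ, 0 < ρ → ρ < δ → δ ≤ δ₀ →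
        coverNumber (closedBall x δ ∩ F) ρ ≤ ENNReal.ofReal (C * (δ / ρ) ^ s) := by
  simp only [CoverUpperBound, mem_singleton_iff, forall_eq]

theorem coverLowerBound_singleton_iff :
    CoverLowerBound F {x} s ↔ ∀ δ₀ : ℝ, 0 < δ₀ → ∃ C : ℝ, 0 < C ∧
      ∀ δ ρ : ℝ, 0 < ρ → ρ < δ → δ ≤ δ₀ →
        ENNReal.ofReal (C * (δ / ρ) ^ s) ≤ coverNumber (closedBall x δ ∩ F) ρ := by
  simp only [CoverLowerBound, mem_singleton_iff, forall_eq]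

end CoverBounds

namespace EquiHomogeneous

variable {X : Type*} [MetricSpace X] {F : Set X} {s : ℝ} {x : X}

/-- `c₁ ≥ 1` keeps `δ / c₁ ≤ δ₀` in the lower bound; it is bought by halving `c₂`. -/
theorem exists_coverNumber_le (heh : EquiHomogeneous F) {δ₀ : ℝ} (hδ₀ : 0 < δ₀) :
    ∃ M c₁ c₂ : ℝ, 1 ≤ M ∧ 1 ≤ c₁ ∧ 0 < c₂ ∧
      ∀ y ∈ F, ∀ z ∈ F, ∀ δ ρ : ℝ, 0 < ρ → ρ < δ → δ ≤ δ₀ →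
        coverNumber (closedBall y δ ∩ F) ρ ≤
          ENNReal.ofReal M * coverNumber (closedBall z (c₁ * δ) ∩ F) (c₂ * ρ) := by
  obtain ⟨M, c₁, c₂, hM, -, hc₂, hEH⟩ := heh δ₀ hδ₀
  refine ⟨M, max c₁ 1, c₂ / 2, hM, le_max_right _ _, by positivity,
    fun y hy z hz δ ρ hρ hρδ hδ => ?_⟩
  have hball : closedBall z (c₁ * δ) ∩ F ⊆ closedBall z (max c₁ 1 * δ) ∩ F :=
    inter_subset_inter_left _ (closedBall_subset_closedBall
      (by gcongr; exacts [(hρ.trans hρδ).le, le_max_left _ _]))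
  calc coverNumber (closedBall y δ ∩ F) ρ
      ≤ ⨆ y ∈ F, coverNumber (closedBall y δ ∩ F) ρ := le_iSup₂_of_le y hy le_rfl
    _ ≤ ENNReal.ofReal M * ⨅ z ∈ F, coverNumber (closedBall z (c₁ * δ) ∩ F) (c₂ * ρ) :=
      hEH δ ρ hρ hρδ hδ
    _ ≤ ENNReal.ofReal M * coverNumber (closedBall z (c₁ * δ) ∩ F) (2 * (c₂ / 2 * ρ)) := by
      rw [← mul_assoc, mul_div_cancel₀ _ two_ne_zero]
      gcongr
      exact iInf₂_le z hz
    _ ≤ ENNReal.ofReal M * coverNumber (closedBall z (max c₁ 1 * δ) ∩ F) (c₂ / 2 * ρ) := by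
      gcongr
      exact coverNumber_two_mul_le hball _

theorem coverUpperBound_of_singleton (heh : EquiHomogeneous F) (hx : x ∈ F) (hs : 0 ≤ s)
    (hloc : CoverUpperBound F {x} s) : CoverUpperBound F F s := by
  intro δ₀ hδ₀
  obtain ⟨M, c₁, c₂, hM, hc₁, hc₂, hEH⟩ := heh.exists_coverNumber_le hδ₀
  obtain ⟨C₀, -, hC₀⟩ := hloc (c₁ * δ₀) (by positivity)
  refine ⟨M * max 1 (C₀ * (c₁ / c₂) ^ s), by positivity, fun y hy δ ρ hρ hρδ hδ => ?_⟩
  have hδpos : 0 < δ := hρ.trans hρδ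
  have hc₁pos : 0 < c₁ := one_pos.trans_le hc₁
  have hx_bound : coverNumber (closedBall x (c₁ * δ) ∩ F) (c₂ * ρ) ≤
      ENNReal.ofReal (max 1 (C₀ * (c₁ / c₂) ^ s) * (δ / ρ) ^ s) := by
    rcases lt_or_ge (c₂ * ρ) (c₁ * δ) with hlt | hge
    · calc coverNumber (closedBall x (c₁ * δ) ∩ F) (c₂ * ρ)
          ≤ ENNReal.ofReal (C₀ * (c₁ * δ / (c₂ * ρ)) ^ s) :=
            hC₀ x rfl _ _ (by positivity) hlt (by gcongr)
        _ = ENNReal.ofReal (C₀ * (c₁ / c₂) ^ s * (δ / ρ) ^ s) := by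
          rw [mul_div_mul_comm, Real.mul_rpow (by positivity) (by positivity), mul_assoc]
        _ ≤ _ := by gcongr; exact le_max_right _ _
    · refine (coverNumber_closedBall_inter_le_one hx (by positivity) hge).trans ?_
      exact ENNReal.one_le_ofReal.2 (one_le_mul_of_one_le_of_one_le (le_max_left _ _)
        (Real.one_le_rpow ((one_le_div hρ).2 hρδ.le) hs))
  calc coverNumber (closedBall y δ ∩ F) ρ
      ≤ ENNReal.ofReal M * coverNumber (closedBall x (c₁ * δ) ∩ F) (c₂ * ρ) :=
        hEH y hy x hx δ ρ hρ hρδ hδ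
    _ ≤ ENNReal.ofReal M * ENNReal.ofReal (max 1 (C₀ * (c₁ / c₂) ^ s) * (δ / ρ) ^ s) := by
        gcongr
    _ = _ := by rw [← ENNReal.ofReal_mul (by positivity), mul_assoc]

theorem coverLowerBound_of_singleton (heh : EquiHomogeneous F) (hx : x ∈ F) (hs : 0 ≤ s)
    (hloc : CoverLowerBound F {x} s) : CoverLowerBound F F s := by
  intro δ₀ hδ₀
  obtain ⟨M, c₁, c₂, hM, hc₁, hc₂, hEH⟩ := heh.exists_coverNumber_le hδ₀
  obtain ⟨C₀, hC₀, hC₀x⟩ := hloc δ₀ hδ₀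
  refine ⟨min 1 (C₀ / M) * (c₂ / c₁) ^ s, by positivity, fun y hy δ ρ hρ hρδ hδ => ?_⟩
  have hδpos : 0 < δ := hρ.trans hρδ
  have hc₁pos : 0 < c₁ := one_pos.trans_le hc₁
  rcases lt_or_ge (ρ / c₂) (δ / c₁) with hlt | hge
  · have hδc₁ : δ / c₁ ≤ δ₀ := (div_le_self hδpos.le hc₁).trans hδ
    have hcompare := hEH x hx y hy (δ / c₁) (ρ / c₂) (by positivity) hlt hδc₁
    rw [mul_div_cancel₀ _ (by positivity), mul_div_cancel₀ _ hc₂.ne'] at hcompare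
    have hscale : δ / c₁ / (ρ / c₂) = c₂ / c₁ * (δ / ρ) := by field_simp
    calc ENNReal.ofReal (min 1 (C₀ / M) * (c₂ / c₁) ^ s * (δ / ρ) ^ s)
        ≤ ENNReal.ofReal (C₀ * (δ / c₁ / (ρ / c₂)) ^ s / M) := by
          rw [hscale, Real.mul_rpow (by positivity) (by positivity), mul_div_right_comm,
            ← mul_assoc]
          gcongr
          exact min_le_right _ _
      _ = ENNReal.ofReal (C₀ * (δ / c₁ / (ρ / c₂)) ^ s) / ENNReal.ofReal M :=
          ENNReal.ofReal_div_of_pos (by positivity)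
      _ ≤ coverNumber (closedBall y δ ∩ F) ρ :=
          ENNReal.div_le_of_le_mul' ((hC₀x x rfl _ _ (by positivity) hlt hδc₁).trans hcompare)
  · have hratio : c₂ / c₁ * (δ / ρ) ≤ 1 := by
      rw [div_le_div_iff₀ hc₁pos hc₂] at hge
      rw [div_mul_div_comm, div_le_one (by positivity)]
      linarith
    calc ENNReal.ofReal (min 1 (C₀ / M) * (c₂ / c₁) ^ s * (δ / ρ) ^ s)
        ≤ ENNReal.ofReal ((c₂ / c₁ * (δ / ρ)) ^ s) := by
          rw [Real.mul_rpow (by positivity) (by positivity), mul_assoc]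
          exact ENNReal.ofReal_le_ofReal
            (mul_le_of_le_one_left (by positivity) (min_le_left _ _))
      _ ≤ 1 := ENNReal.ofReal_le_one.2 (Real.rpow_le_one (by positivity) hratio hs)
      _ ≤ coverNumber (closedBall y δ ∩ F) ρ :=
          one_le_coverNumber (A := closedBall y δ ∩ F) ⟨y, mem_closedBall_self hδpos.le, hy⟩ ρ

end EquiHomogeneous

/-- For an equi-homogeneous set `F`, the Assouad and lower Assouad
dimensions may be computed from the local covers at any fixed point `x ∈ F`. -/
theorem assouadDims_eq_local_of_equiHomogeneous {X : Type*} [MetricSpace X]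
    (F : Set X) (heh : EquiHomogeneous F) (x : X) (hx : x ∈ F) :
    assouadDim F =
      sInf {s : ℝ | 0 ≤ s ∧ ∀ δ₀ : ℝ, 0 < δ₀ → ∃ C : ℝ, 0 < C ∧
        ∀ δ ρ : ℝ, 0 < ρ → ρ < δ → δ ≤ δ₀ →
          coverNumber (closedBall x δ ∩ F) ρ ≤ ENNReal.ofReal (C * (δ / ρ) ^ s)} ∧
    lowerAssouadDim F =
      sSup {s : ℝ | 0 ≤ s ∧ ∀ δ₀ : ℝ, 0 < δ₀ → ∃ C : ℝ, 0 < C ∧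
        ∀ δ ρ : ℝ, 0 < ρ → ρ < δ → δ ≤ δ₀ →
          ENNReal.ofReal (C * (δ / ρ) ^ s) ≤ coverNumber (closedBall x δ ∩ F) ρ} := by
  have hxF : {x} ⊆ F := singleton_subset_iff.2 hx
  refine ⟨congrArg sInf (ext fun s => and_congr_right fun hs => ?_),
    congrArg sSup (ext fun s => and_congr_right fun hs => ?_)⟩
  · rw [← coverUpperBound_singleton_iff]
    exact ⟨fun h => CoverUpperBound.mono h hxF, heh.coverUpperBound_of_singleton hx hs⟩
  · rw [← coverLowerBound_singleton_iff]
    exact ⟨fun h => CoverLowerBound.mono h hxF, heh.coverLowerBound_of_singleton hx hs⟩
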